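/- arXiv:1606.04253 — 2 statements merged into one kernel-verified Lean document; each statement's English description precedes it below -/
import Mathlib

section
/- Let V be a finite-dimensional ℂ-vector space and φ, φ' : V × V → V bilinear maps. Suppose there exists an invertible ℂ(ε)-linear map ℱ : V(ε) → V(ε) such that for all x, y ∈ V the element ℱ⁻¹(Φ(ℱx, ℱy)) ∈ V(ε), where Φ denotes the ℂ(ε)-bilinear extension of φ, is regular at ε = 0 with value φ'(x, y). Then φ' is an algebraic degeneration of φ, i.e., φ' lies in the closure of the orbit {(x, y) ↦ g(φ(g⁻¹x, g⁻¹y)) : g ∈ GL(V)} in the space of bilinear maps on V with its canonical topology. -/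
open scoped BigOperators

/-- A rational function `f ∈ ℂ(ε)` is regular at `ε = 0` if its (reduced)
denominator does not vanish at `0`. -/
def RegAt0 (f : RatFunc ℂ) : Prop := Polynomial.eval 0 f.denom ≠ 0

/-- The value at `ε = 0` of a rational function. -/
noncomputable def evalAt0 (f : RatFunc ℂ) : ℂ :=
  Polynomial.eval 0 f.num / Polynomial.eval 0 f.denom

/-- The `GL(V)`-orbit `{(x, y) ↦ g (φ (g⁻¹ x, g⁻¹ y)) : g ∈ GL(V)}` of the
bilinear map `φ`, written in coordinates. -/
def BilOrbit {n : ℕ} (φ : Fin n → Fin n → Fin n → ℂ) :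
    Set (Fin n → Fin n → Fin n → ℂ) :=
  {S | ∃ g : GL (Fin n) ℂ,
    S = fun i j k => ∑ a, ∑ b, ∑ c,
      (↑g⁻¹ : Matrix (Fin n) (Fin n) ℂ) a i *
      (↑g⁻¹ : Matrix (Fin n) (Fin n) ℂ) b j *
      (↑g : Matrix (Fin n) (Fin n) ℂ) k c * φ a b c}

/-!
Write `G(ε) = ℱ⁻¹ Φ(ℱ ·, ℱ ·)` in coordinates. Away from the finitely many poles of the entries
of `ℱ` and `ℱ⁻¹`, evaluation at `ε = t` is a ring homomorphism on everything in sight, so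
`ℱ(t)` is invertible and `G(t)` is the transform of `φ` by `ℱ(t)⁻¹`, a point of the orbit.
Since `G` is regular at `0` with value `φ'`, letting `t → 0` through such points exhibits `φ'`
as a limit of orbit points.
-/

open Filter Topology

section

variable {ι R S : Type*} [Fintype ι]

/-- Structure constants of `(x, y) ↦ g (φ (h x, h y))`, so that
`BilOrbit φ = {transformBilin g g⁻¹ φ | g}`. -/
def transformBilin [CommSemiring R] (g h : Matrix ι ι R) (φ : ι → ι → ι → R) :
    ι → ι → ι → R :=
  fun i j k => ∑ a, ∑ b, ∑ c, h a i * h b j * g k c * φ a b c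

lemma transformBilin_apply_eq_sum_mul [CommSemiring R] (g h : Matrix ι ι R)
    (φ : ι → ι → ι → R) (i j k : ι) :
    transformBilin g h φ i j k = ∑ c, g k c * ∑ a, ∑ b, φ a b c * h a i * h b j := by
  simp only [Finset.mul_sum]
  symm
  rw [transformBilin, Finset.sum_comm]
  refine Finset.sum_congr rfl fun a _ => ?_
  rw [Finset.sum_comm]
  exact Finset.sum_congr rfl fun b _ => Finset.sum_congr rfl fun c _ => by ring

lemma map_transformBilin [CommSemiring R] [CommSemiring S] (f : R →+* S)
    (g h : Matrix ι ι R) (φ : ι → ι → ι → R) (i j k : ι) :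
    f (transformBilin g h φ i j k) =
      transformBilin (g.map f) (h.map f) (fun a b c => f (φ a b c)) i j k := by
  simp [transformBilin]

lemma Matrix.GeneralLinearGroup.exists_map_subtype_eq [DecidableEq ι] [CommRing R]
    {A : Subring R} (g : GL ι R) (hg : ∀ i j, (g : Matrix ι ι R) i j ∈ A)
    (hg' : ∀ i j, (↑g⁻¹ : Matrix ι ι R) i j ∈ A) :
    ∃ g₀ : GL ι A, (g₀ : Matrix ι ι A).map A.subtype = g ∧
      (↑g₀⁻¹ : Matrix ι ι A).map A.subtype = ↑g⁻¹ := by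
  have hinj : Function.Injective (A.subtype.mapMatrix : Matrix ι ι A → Matrix ι ι R) :=
    Matrix.map_injective Subtype.val_injective
  let M : Matrix ι ι A := fun i j => ⟨_, hg i j⟩
  let M' : Matrix ι ι A := fun i j => ⟨_, hg' i j⟩
  have hM : A.subtype.mapMatrix M = g := rfl
  have hM' : A.subtype.mapMatrix M' = ↑g⁻¹ := rfl
  refine ⟨⟨M, M', hinj ?_, hinj ?_⟩, hM, hM'⟩
  · rw [map_mul, hM, hM', Units.mul_inv, map_one]
  · rw [map_mul, hM, hM', Units.inv_mul, map_one]

end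

namespace RatFunc

variable {K : Type*} [Field K]

def regularAt (t : K) : Subalgebra K (RatFunc K) where
  carrier := {f | f.denom.eval t ≠ 0}
  mul_mem' {f g} hf hg h0 := by
    have := Polynomial.eval_eq_zero_of_dvd_of_eval_eq_zero (denom_mul_dvd f g) h0
    exact mul_ne_zero hf hg (by rwa [Polynomial.eval_mul] at this)
  add_mem' {f g} hf hg h0 := by
    have := Polynomial.eval_eq_zero_of_dvd_of_eval_eq_zero (denom_add_dvd f g) h0
    exact mul_ne_zero hf hg (by rwa [Polynomial.eval_mul] at this)
  algebraMap_mem' _ := by simp [denom_C]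

lemma mem_regularAt {t : K} {f : RatFunc K} : f ∈ regularAt t ↔ f.denom.eval t ≠ 0 := Iff.rfl

noncomputable def evalAt (t : K) : regularAt t →ₐ[K] K where
  toFun f := eval (RingHom.id K) t f
  map_one' := eval_one _ _
  map_mul' f g := eval_mul _ _ f.2 g.2
  map_zero' := eval_zero _ _
  map_add' f g := eval_add _ _ f.2 g.2
  commutes' _ := eval_C _ _

lemma eventually_mem_regularAt (f : RatFunc K) : ∀ᶠ t in cofinite, f ∈ regularAt t := by
  simpa [eventually_cofinite, mem_regularAt] using
    Polynomial.finite_setOfPred_isRoot (denom_ne_zero f)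

lemma tendsto_eval [TopologicalSpace K] [IsTopologicalDivisionRing K] {t : K}
    {f : RatFunc K} (hf : f ∈ regularAt t) :
    Tendsto (fun s => eval (RingHom.id K) s f) (𝓝 t) (𝓝 (eval (RingHom.id K) t f)) :=
  (f.num.continuous.tendsto t).div (f.denom.continuous.tendsto t) hf

theorem exists_eval_transformBilin_eq {ι : Type*} [Fintype ι] [DecidableEq ι] {t : K}
    (F : GL ι (RatFunc K))
    (hF : ∀ i j, (F : Matrix ι ι (RatFunc K)) i j ∈ regularAt t)
    (hF' : ∀ i j, (↑F⁻¹ : Matrix ι ι (RatFunc K)) i j ∈ regularAt t) (φ : ι → ι → ι → K) :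
    ∃ g : GL ι K, (fun i j k => eval (RingHom.id K) t
        (transformBilin ↑F⁻¹ ↑F (fun a b c => C (φ a b c)) i j k)) = transformBilin ↑g ↑g⁻¹ φ := by
  obtain ⟨F₀, hF₀, hF₀'⟩ := Matrix.GeneralLinearGroup.exists_map_subtype_eq
    (A := (regularAt t).toSubring) F hF hF'
  refine ⟨(Matrix.GeneralLinearGroup.map (evalAt t).toRingHom F₀)⁻¹, ?_⟩
  ext i j k
  let φ₀ : ι → ι → ι → regularAt t := fun a b c => algebraMap K _ (φ a b c)
  have hφ₀ : (fun a b c => C (φ a b c)) =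
      fun a b c => (regularAt t).toSubring.subtype (φ₀ a b c) := rfl
  calc _ = evalAt t (transformBilin ↑F₀⁻¹ ↑F₀ φ₀ i j k) := by
        rw [← hF₀, ← hF₀', hφ₀, ← map_transformBilin]
        rfl
    _ = transformBilin ((↑F₀⁻¹ : Matrix ι ι _).map (evalAt t)) ((F₀ : Matrix ι ι _).map (evalAt t))
          φ i j k := by
        rw [← AlgHom.coe_toRingHom, map_transformBilin]
        simp only [φ₀, AlgHom.coe_toRingHom, AlgHom.commutes, Algebra.algebraMap_self,
          RingHom.id_apply]
    _ = _ := rfl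

end RatFunc

open RatFunc

/-- if `ℱ` is an invertible `ℂ(ε)`-linear map on `V(ε)` such that
`ℱ⁻¹ (Φ (ℱ x, ℱ y))` is regular at `ε = 0` with value `φ'(x, y)` for all
`x, y ∈ V` (where `Φ` is the `ℂ(ε)`-bilinear extension of `φ`), then `φ'` is an
algebraic degeneration of `φ`. -/
theorem stmt2 {n : ℕ} (φ φ' : Fin n → Fin n → Fin n → ℂ)
    (ℱ : GL (Fin n) (RatFunc ℂ))
    (h : ∀ x y : Fin n → ℂ, ∀ k : Fin n,
      RegAt0 (∑ c, (↑ℱ⁻¹ : Matrix (Fin n) (Fin n) (RatFunc ℂ)) k c *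
          ∑ a, ∑ b, RatFunc.C (φ a b c) *
            (∑ i, (↑ℱ : Matrix (Fin n) (Fin n) (RatFunc ℂ)) a i * RatFunc.C (x i)) *
            (∑ j, (↑ℱ : Matrix (Fin n) (Fin n) (RatFunc ℂ)) b j * RatFunc.C (y j))) ∧
      evalAt0 (∑ c, (↑ℱ⁻¹ : Matrix (Fin n) (Fin n) (RatFunc ℂ)) k c *
          ∑ a, ∑ b, RatFunc.C (φ a b c) *
            (∑ i, (↑ℱ : Matrix (Fin n) (Fin n) (RatFunc ℂ)) a i * RatFunc.C (x i)) *
            (∑ j, (↑ℱ : Matrix (Fin n) (Fin n) (RatFunc ℂ)) b j * RatFunc.C (y j))) =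
        ∑ i, ∑ j, φ' i j k * x i * y j) :
    φ' ∈ closure (BilOrbit φ) := by
  let G := transformBilin ↑ℱ⁻¹ ↑ℱ fun a b c => RatFunc.C (φ a b c)
  have hG : ∀ i j k, G i j k ∈ regularAt 0 ∧ eval (RingHom.id ℂ) 0 (G i j k) = φ' i j k := by
    intro i j k
    have hij := h (Pi.single i 1) (Pi.single j 1) k
    simp only [Pi.single_apply, apply_ite RatFunc.C, map_one, map_zero, mul_ite, mul_one, mul_zero,
      Finset.sum_ite_eq', Finset.mem_univ, if_true] at hij
    rwa [← transformBilin_apply_eq_sum_mul] at hij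
  have hlim : Tendsto (fun t i j k => eval (RingHom.id ℂ) t (G i j k)) (𝓝 0) (𝓝 φ') :=
    tendsto_pi_nhds.2 fun i => tendsto_pi_nhds.2 fun j => tendsto_pi_nhds.2 fun k =>
      (hG i j k).2 ▸ tendsto_eval (hG i j k).1
  have horbit : ∀ᶠ t in 𝓝[≠] 0, (fun i j k => eval (RingHom.id ℂ) t (G i j k)) ∈ BilOrbit φ := by
    refine nhdsNE_le_cofinite 0 ?_
    filter_upwards [eventually_all.2 fun i => eventually_all.2 fun j =>
        eventually_mem_regularAt ((ℱ : Matrix (Fin n) (Fin n) (RatFunc ℂ)) i j),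
      eventually_all.2 fun i => eventually_all.2 fun j =>
        eventually_mem_regularAt ((↑ℱ⁻¹ : Matrix (Fin n) (Fin n) (RatFunc ℂ)) i j)] with t hF hF'
    exact exists_eval_transformBilin_eq ℱ hF hF' φ
  exact mem_closure_of_tendsto (hlim.mono_left nhdsWithin_le_nhds) horbit
end

section
/- Let U, V, W be finite-dimensional ℂ-vector spaces with dim U = n, and let T : U → V ⊗ W be an injective linear map. Then for every d with 0 ≤ d ≤ n, bR(T) ≥ n − d + min{ bR(T|_{U'}) : U' ⊆ U a subspace with dim U' = d }, where T|_{U'} : U' → V ⊗ W denotes the restriction of T to U'. -/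
open scoped BigOperators

/-- `T` (viewed as a linear map `ℂⁿ → ℂᵖ ⊗ ℂᵐ`) is a sum of `r` maps of the
form `u ↦ f(u) v ⊗ w`, i.e. has rank at most `r`. -/
def rankLE {n p m : ℕ} (T : Fin n → Fin p → Fin m → ℂ) (r : ℕ) : Prop :=
  ∃ f : Fin r → Fin n → ℂ, ∃ v : Fin r → Fin p → ℂ, ∃ w : Fin r → Fin m → ℂ,
    T = fun i j k => ∑ s, f s i * v s j * w s k

/-- The border rank: the least `r` such that `T` is a limit of maps of rank at
most `r`. -/
noncomputable def bRank {n p m : ℕ} (T : Fin n → Fin p → Fin m → ℂ) : ℕ :=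
  sInf {r | T ∈ closure {S | rankLE S r}}

/-!
Write `r = bR(T)` and `q = n - d`. Injectivity is an open condition, so maps of rank `≤ r`
close to `T` are injective, whence `n ≤ r`. For a decomposition `S = ∑ₛ fₛ ⊗ vₛ ⊗ wₛ` with
`q + (r - q)` terms, the common kernel of the first `q` forms `fₛ` has dimension `≥ d`, and on
an orthonormal `d`-frame in it `S` restricts to rank `≤ r - q`. Orthonormal `d`-frames form a
compact set, so along approximants of `T` these frames accumulate at an orthonormal frame `P`,
and the restriction of `T` to the span of `P` is a limit of maps of rank `≤ r - q`.
-/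

open Module Set Submodule

theorem exists_mem_closure_of_isCompact {X Z Y : Type*} [TopologicalSpace X]
    [TopologicalSpace Z] [TopologicalSpace Y] {K : Set Z} (hK : IsCompact K)
    {f : X → Z → Y} (hf : Continuous (Function.uncurry f)) {A : Set X} {C : Set Y}
    (hA : ∀ x ∈ A, ∃ z ∈ K, f x z ∈ C) {x : X} (hx : x ∈ closure A) :
    ∃ z ∈ K, f x z ∈ closure C := by
  have : CompactSpace K := isCompact_iff_compactSpace.mp hK
  let B : Set (X × K) := {y | f y.1 y.2 ∈ closure C}
  have hB : IsClosed (Prod.fst '' B) :=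
    isClosedMap_fst_of_compactSpace _ <| isClosed_closure.preimage <|
      hf.comp (continuous_fst.prodMk (continuous_subtype_val.comp continuous_snd))
  obtain ⟨⟨_, z⟩, hz, rfl⟩ := hB.closure_subset_iff.mpr
    (fun a ha ↦ let ⟨z, hzK, hz⟩ := hA a ha; ⟨(a, ⟨z, hzK⟩), subset_closure hz, rfl⟩) hx
  exact ⟨z, z.2, hz⟩

theorem isCompact_setOf_orthonormal {𝕜 E ι : Type*} [RCLike 𝕜] [NormedAddCommGroup E]
    [InnerProductSpace 𝕜 E] [FiniteDimensional 𝕜 E] [Fintype ι] :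
    IsCompact {v : ι → E | Orthonormal 𝕜 v} := by
  classical
  have := FiniteDimensional.proper_rclike 𝕜 E
  refine Metric.isCompact_of_isClosed_isBounded ?_ ?_
  · simp only [orthonormal_iff_ite, ofPred_forall]
    exact isClosed_iInter fun i ↦ isClosed_iInter fun j ↦
      isClosed_eq (by fun_prop) continuous_const
  · refine (Metric.isBounded_closedBall (x := 0) (r := 1)).subset fun v hv ↦ ?_
    rw [mem_closedBall_zero_iff, pi_norm_le_iff_of_nonneg zero_le_one]
    exact fun i ↦ (hv.1 i).le

theorem Submodule.exists_orthonormal_of_le_finrank {𝕜 E : Type*} [RCLike 𝕜]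
    [NormedAddCommGroup E] [InnerProductSpace 𝕜 E] (K : Submodule 𝕜 E) [FiniteDimensional 𝕜 K]
    {d : ℕ} (hd : d ≤ finrank 𝕜 K) : ∃ v : Fin d → E, Orthonormal 𝕜 v ∧ ∀ a, v a ∈ K :=
  ⟨fun a ↦ stdOrthonormalBasis 𝕜 K (Fin.castLE hd a),
    ((stdOrthonormalBasis 𝕜 K).orthonormal.comp _ (Fin.castLE_injective hd)).comp_linearIsometry
      K.subtypeₗᵢ,
    fun a ↦ (stdOrthonormalBasis 𝕜 K (Fin.castLE hd a)).2⟩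

theorem exists_orthonormal_forall_sum_mul_eq_zero {d q n : ℕ} (hd : d + q ≤ n)
    (g : Fin q → Fin n → ℂ) :
    ∃ v : Fin d → EuclideanSpace ℂ (Fin n), Orthonormal ℂ v ∧ ∀ s a, ∑ i, g s i * v a i = 0 := by
  let L := Matrix.toEuclideanLin (Matrix.of g)
  have hker : d ≤ finrank ℂ (LinearMap.ker L) := by
    have := L.finrank_range_add_finrank_ker
    have := (LinearMap.range L).finrank_le
    simp only [finrank_euclideanSpace_fin] at *
    omega
  obtain ⟨v, hv, hvL⟩ := (LinearMap.ker L).exists_orthonormal_of_le_finrank hker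
  refine ⟨v, hv, fun s a ↦ ?_⟩
  simpa [L, Matrix.mulVec, dotProduct] using congrArg (· s) (hvL a)

theorem rankLE_mul {n p m : ℕ} (T : Fin n → Fin p → Fin m → ℂ) : rankLE T (n * p) := by
  refine ⟨fun s i ↦ if i = (finProdFinEquiv.symm s).1 then 1 else 0,
    fun s j ↦ if j = (finProdFinEquiv.symm s).2 then 1 else 0,
    fun s k ↦ T (finProdFinEquiv.symm s).1 (finProdFinEquiv.symm s).2 k, ?_⟩
  funext i j k
  rw [← finProdFinEquiv.sum_comp (M := ℂ)]
  simp [Fintype.sum_prod_type]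

theorem mem_closure_rankLE_bRank {n p m : ℕ} (T : Fin n → Fin p → Fin m → ℂ) :
    T ∈ closure {S | rankLE S (bRank T)} :=
  Nat.sInf_mem (s := {r | T ∈ closure {S | rankLE S r}}) ⟨n * p, subset_closure (rankLE_mul T)⟩

theorem rankLE.card_le_of_linearIndependent {n p m r : ℕ} {S : Fin n → Fin p → Fin m → ℂ}
    (hS : rankLE S r) (hli : LinearIndependent ℂ S) : n ≤ r := by
  obtain ⟨f, v, w, rfl⟩ := hS
  let g : Fin r → Fin p → Fin m → ℂ := fun s j k ↦ v s j * w s k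
  have hspan : span ℂ (range fun i j k ↦ ∑ s, f s i * v s j * w s k) ≤ span ℂ (range g) := by
    refine span_le.mpr (range_subset_iff.mpr fun i ↦ ?_)
    have hi : (fun j k ↦ ∑ s, f s i * v s j * w s k) = ∑ s, f s i • g s := by
      funext j k
      simp [g, mul_assoc]
    rw [SetLike.mem_coe, hi]
    exact sum_mem fun s _ ↦ smul_mem _ _ (subset_span (mem_range_self s))
  simpa using (linearIndependent_iff_card_le_finrank_span.mp hli).trans
    ((finrank_mono hspan).trans (finrank_range_le_card g))

theorem le_of_mem_closure_rankLE {n p m r : ℕ} {T : Fin n → Fin p → Fin m → ℂ}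
    (hT : LinearIndependent ℂ T) (h : T ∈ closure {S | rankLE S r}) : n ≤ r := by
  obtain ⟨S, hS, hSr⟩ := mem_closure_iff.mp h _ isOpen_setOfPred_linearIndependent hT
  exact hSr.card_le_of_linearIndependent hS

theorem linearIndependent_of_injective_sum_mul {n p m : ℕ} {T : Fin n → Fin p → Fin m → ℂ}
    (hT : Function.Injective fun x : Fin n → ℂ ↦ fun j k ↦ ∑ i, T i j k * x i) :
    LinearIndependent ℂ T := by
  rw [linearIndependent_iff_injective_fintypeLinearCombination]
  convert hT using 1
  funext x j k
  simp [Fintype.linearCombination_apply, mul_comm]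

/-- `T|_{U'}` for the subspace `U'` spanned by the columns of `P`. -/
def tensorRestrict {n d p m : ℕ} (T : Fin n → Fin p → Fin m → ℂ) (P : Matrix (Fin n) (Fin d) ℂ) :
    Fin d → Fin p → Fin m → ℂ :=
  fun a j k ↦ ∑ i, T i j k * P i a

theorem rankLE_tensorRestrict_of_castAdd_eq_zero {n d p m q r : ℕ} (f : Fin (q + r) → Fin n → ℂ)
    (v : Fin (q + r) → Fin p → ℂ) (w : Fin (q + r) → Fin m → ℂ) (P : Matrix (Fin n) (Fin d) ℂ)
    (hP : ∀ s a, ∑ i, f (Fin.castAdd r s) i * P i a = 0) :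
    rankLE (tensorRestrict (fun i j k ↦ ∑ s, f s i * v s j * w s k) P) r := by
  refine ⟨fun s a ↦ ∑ i, f (Fin.natAdd q s) i * P i a, fun s ↦ v (Fin.natAdd q s),
    fun s ↦ w (Fin.natAdd q s), ?_⟩
  funext a j k
  calc ∑ i, (∑ s, f s i * v s j * w s k) * P i a
      = ∑ s, (∑ i, f s i * P i a) * v s j * w s k := by
        simp only [Finset.sum_mul]
        rw [Finset.sum_comm]
        exact Finset.sum_congr rfl fun s _ ↦ Finset.sum_congr rfl fun i _ ↦ by ring
    _ = _ := by simp [Fin.sum_univ_add, hP]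

theorem exists_injective_tensorRestrict_mem_closure {n d p m q r : ℕ} (hd : d + q ≤ n)
    {T : Fin n → Fin p → Fin m → ℂ} (hT : T ∈ closure {S | rankLE S (q + r)}) :
    ∃ P : Matrix (Fin n) (Fin d) ℂ, Function.Injective P.mulVecLin ∧
      tensorRestrict T P ∈ closure {S | rankLE S r} := by
  let toMatrix (v : Fin d → EuclideanSpace ℂ (Fin n)) : Matrix (Fin n) (Fin d) ℂ :=
    Matrix.of fun i a ↦ v a i
  have hcont : Continuous (Function.uncurry fun (S : Fin n → Fin p → Fin m → ℂ)
      (v : Fin d → EuclideanSpace ℂ (Fin n)) ↦ tensorRestrict S (toMatrix v)) := by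
    unfold tensorRestrict toMatrix
    fun_prop
  obtain ⟨v, hv, hvT⟩ := exists_mem_closure_of_isCompact (C := {S | rankLE S r})
    isCompact_setOf_orthonormal hcont (fun S hS ↦ by
      obtain ⟨f, v, w, rfl⟩ := hS
      obtain ⟨u, hu, hfu⟩ := exists_orthonormal_forall_sum_mul_eq_zero hd (f ∘ Fin.castAdd r)
      exact ⟨u, hu, rankLE_tensorRestrict_of_castAdd_eq_zero f v w (toMatrix u) hfu⟩) hT
  refine ⟨toMatrix v, ?_, hvT⟩
  rw [Matrix.coe_mulVecLin, Matrix.mulVec_injective_iff]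
  exact hv.linearIndependent.map' (WithLp.linearEquiv 2 ℂ (Fin n → ℂ)).toLinearMap
    (LinearEquiv.ker _)

/-- for an injective linear map `T : U → V ⊗ W` with `dim U = n`
and any `0 ≤ d ≤ n`,
`bR(T) ≥ n − d + min { bR(T|_{U'}) : U' ⊆ U, dim U' = d }`,
where `d`-dimensional subspaces `U' ⊆ U` are parameterized by injective linear
maps `P : ℂᵈ → U`. -/
theorem stmt9 {n p m : ℕ} (d : ℕ) (hd : d ≤ n) (T : Fin n → Fin p → Fin m → ℂ)
    (hT : Function.Injective
      (fun x : Fin n → ℂ => fun j k => ∑ i, T i j k * x i)) :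
    n - d + sInf {r | ∃ P : Matrix (Fin n) (Fin d) ℂ,
        Function.Injective P.mulVecLin ∧
        r = bRank (fun a j k => ∑ i, T i j k * P i a)} ≤ bRank T := by
  have hT_mem := mem_closure_rankLE_bRank T
  have hn : n ≤ bRank T :=
    le_of_mem_closure_rankLE (linearIndependent_of_injective_sum_mul hT) hT_mem
  obtain ⟨r, hr⟩ := Nat.exists_eq_add_of_le (show n - d ≤ bRank T by omega)
  rw [hr] at hT_mem ⊢
  obtain ⟨P, hP, hPr⟩ :=
    exists_injective_tensorRestrict_mem_closure (show d + (n - d) ≤ n by omega) hT_mem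
  calc n - d + sInf _ ≤ n - d + bRank (tensorRestrict T P) := by
        gcongr
        exact Nat.sInf_le ⟨P, hP, rfl⟩
    _ ≤ n - d + r := by
        gcongr
        exact Nat.sInf_le hPr
end
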